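/- Efficient implementation of fixed-share with sleeping experts: the weights w_{j,t} computed by the fixed-share rule F_{η,α} (with its loss and share updates) coincide for all j and t with the marginalized weights w'_{j,t} = Σ over legal compound experts j_1^{t+1} with j_{t+1} = j of ν(j_1^{t+1}) e^{-η Σ_{s=1}^t ℓ_s(δ_{j_s})}. -/
import Mathlib


/-- The transition functions of the fixed-share analysis. -/
noncomputable def Tr (N : ℕ) (E : ℕ → Finset (Fin N)) (α : ℝ) (t : ℕ) (i j : Fin N) : ℝ :=
  if j ∈ E (t + 1) then
    (if i ∈ E (t + 1) then
      (if i = j then (1 - α) + α / (E (t + 1)).card else α / (E (t + 1)).card)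
     else 1 / (E (t + 1)).card)
  else 0

/-- The Markov prior over compound experts of horizon `t+1`, with uniform initial distribution
on `E 0` and transitions `Tr`. -/
noncomputable def nuDist (N t : ℕ) (E : ℕ → Finset (Fin N)) (α : ℝ)
    (σ : Fin (t + 1) → Fin N) : ℝ :=
  (if σ 0 ∈ E 0 then (1 : ℝ) / (E 0).card else 0) *
    ∏ s : Fin t, Tr N E α s.val (σ s.castSucc) (σ s.succ)

lemma nuDist_snoc (N t : ℕ) (E : ℕ → Finset (Fin N)) (α : ℝ)
    (σ : Fin (t + 1) → Fin N) (x : Fin N) :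
    nuDist N (t + 1) E α (Fin.snoc σ x) =
      nuDist N t E α σ * Tr N E α t (σ (Fin.last t)) x := by
  unfold nuDist
  rw [Fin.prod_univ_castSucc]
  have h0 : (Fin.snoc σ x : Fin (t + 2) → Fin N) 0 = σ 0 := by
    have h : (0 : Fin (t + 2)) = Fin.castSucc 0 := rfl
    rw [h, Fin.snoc_castSucc]
  have hterm : ∀ s : Fin t,
      Tr N E α (Fin.castSucc s).val
        ((Fin.snoc σ x : Fin (t + 2) → Fin N) (Fin.castSucc s).castSucc)
        ((Fin.snoc σ x : Fin (t + 2) → Fin N) (Fin.castSucc s).succ)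
      = Tr N E α s.val (σ s.castSucc) (σ s.succ) := by
    intro s
    rw [Fin.succ_castSucc, Fin.snoc_castSucc, Fin.snoc_castSucc, Fin.coe_castSucc]
  have hl1 : (Fin.snoc σ x : Fin (t + 2) → Fin N) (Fin.last t).castSucc = σ (Fin.last t) :=
    Fin.snoc_castSucc ..
  have hl2 : (Fin.snoc σ x : Fin (t + 2) → Fin N) (Fin.last t).succ = x := by
    have h : (Fin.last t).succ = Fin.last (t + 1) := rfl
    rw [h, Fin.snoc_last]
  rw [h0, hl1, hl2, Finset.prod_congr rfl (fun s _ => hterm s), Fin.val_last, mul_assoc]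

lemma loss_snoc (N t : ℕ) (ℓ : ℕ → Fin N → ℝ) (σ : Fin (t + 1) → Fin N) (x : Fin N) :
    (∑ s : Fin (t + 1), ℓ s.val ((Fin.snoc σ x : Fin (t + 2) → Fin N) s.castSucc))
      = (∑ s : Fin t, ℓ s.val (σ s.castSucc)) + ℓ t (σ (Fin.last t)) := by
  rw [Fin.sum_univ_castSucc]
  congr 1
  · exact Finset.sum_congr rfl (fun s _ => by rw [Fin.snoc_castSucc, Fin.coe_castSucc])
  · rw [Fin.snoc_castSucc, Fin.val_last]

lemma snoc_sum (N t : ℕ) (F : (Fin (t + 2) → Fin N) → ℝ) :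
    (∑ σ : Fin (t + 2) → Fin N, F σ)
      = ∑ σ : Fin (t + 1) → Fin N, ∑ x : Fin N, F (Fin.snoc σ x) := by
  have hbij : Function.Bijective
      (fun p : (Fin (t + 1) → Fin N) × Fin N => (Fin.snoc p.1 p.2 : Fin (t + 2) → Fin N)) := by
    constructor
    · intro p q h
      have h1 : p.1 = q.1 := by
        funext s
        have := congrFun h (Fin.castSucc s)
        simpa using this
      have h2 : p.2 = q.2 := by
        have := congrFun h (Fin.last (t + 1))
        simpa using this
      exact Prod.ext h1 h2
    · intro σ
      exact ⟨(Fin.init σ, σ (Fin.last (t + 1))), Fin.snoc_init_self σ⟩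
  calc (∑ σ : Fin (t + 2) → Fin N, F σ)
      = ∑ p : (Fin (t + 1) → Fin N) × Fin N, F (Fin.snoc p.1 p.2) :=
        (Fintype.sum_bijective _ hbij _ _ (fun p => rfl)).symm
    _ = ∑ σ : Fin (t + 1) → Fin N, ∑ x : Fin N, F (Fin.snoc σ x) := Fintype.sum_prod_type (f := fun p => F (Fin.snoc p.1 p.2))


/-- Efficient implementation of fixed-share with sleeping experts: the weights `w_{j,t}`
computed by the loss and share updates of the rule `F_{η,α}` coincide with the marginalized
weights of the exponentially weighted average over compound experts with Markov prior `ν`. -/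
theorem fixed_share_efficient_implementation
    (N : ℕ) (hN : 0 < N)
    (E : ℕ → Finset (Fin N)) (hE : ∀ t, (E t).Nonempty)
    (α η : ℝ)
    -- `ℓ t i` is the loss `ℓ_t(δ_i)` of expert `i` at round `t`
    (ℓ : ℕ → Fin N → ℝ)
    (w : ℕ → Fin N → ℝ)
    (hw0 : ∀ i, w 0 i = if i ∈ E 0 then (1 : ℝ) / (E 0).card else 0)
    (hupd : ∀ t j, w (t + 1) j =
      if j ∈ E (t + 1) then
        (1 / ((E (t + 1)).card : ℝ)) * (∑ i ∈ E t \ E (t + 1), w t i * Real.exp (-η * ℓ t i))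
          + (α / ((E (t + 1)).card : ℝ)) *
              (∑ i ∈ E t ∩ E (t + 1), w t i * Real.exp (-η * ℓ t i))
          + (1 - α) * (if j ∈ E t ∩ E (t + 1) then w t j * Real.exp (-η * ℓ t j) else 0)
      else 0) :
    ∀ t j, w t j =
      ∑ σ : Fin (t + 1) → Fin N,
        nuDist N t E α σ * Real.exp (-η * ∑ s : Fin t, ℓ s.val (σ s.castSucc)) *
          (if σ (Fin.last t) = j then 1 else 0) := by
  have hwz : ∀ t i, i ∉ E t → w t i = 0 := by
    intro t i hi
    cases t with
    | zero => rw [hw0]; simp [hi]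
    | succ t => rw [hupd]; simp [hi]
  intro t
  induction t with
  | zero =>
    intro j
    rw [hw0]
    have e0 : (∑ σ : Fin 1 → Fin N,
        nuDist N 0 E α σ * Real.exp (-η * ∑ s : Fin 0, ℓ s.val (σ s.castSucc)) *
          (if σ (Fin.last 0) = j then 1 else 0))
        = ∑ i : Fin N, (if i ∈ E 0 then (1 : ℝ) / (E 0).card else 0) *
            (if i = j then 1 else 0) := by
      apply Fintype.sum_equiv (Equiv.funUnique (Fin 1) (Fin N))
      intro σ
      simp [nuDist]
    rw [e0]
    simp only [mul_ite, mul_one, mul_zero, Finset.sum_ite_eq', Finset.mem_univ, if_true]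
  | succ t ih =>
    intro j
    have key : (∑ σ : Fin (t + 2) → Fin N,
        nuDist N (t + 1) E α σ *
          Real.exp (-η * ∑ s : Fin (t + 1), ℓ s.val (σ s.castSucc)) *
          (if σ (Fin.last (t + 1)) = j then 1 else 0))
        = ∑ i : Fin N, w t i * Real.exp (-η * ℓ t i) * Tr N E α t i j := by
      rw [snoc_sum]
      have step1 : ∀ σ : Fin (t + 1) → Fin N,
          (∑ x : Fin N, nuDist N (t + 1) E α (Fin.snoc σ x) *
            Real.exp (-η * ∑ s : Fin (t + 1), ℓ s.val ((Fin.snoc σ x : Fin (t+2) → Fin N) s.castSucc)) *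
            (if (Fin.snoc σ x : Fin (t+2) → Fin N) (Fin.last (t + 1)) = j then 1 else 0))
          = ∑ i : Fin N,
              (nuDist N t E α σ * Real.exp (-η * ∑ s : Fin t, ℓ s.val (σ s.castSucc)) *
                (if σ (Fin.last t) = i then 1 else 0)) *
              (Real.exp (-η * ℓ t i) * Tr N E α t i j) := by
        intro σ
        have hx : ∀ x : Fin N,
            nuDist N (t + 1) E α (Fin.snoc σ x) *
              Real.exp (-η * ∑ s : Fin (t + 1), ℓ s.val ((Fin.snoc σ x : Fin (t+2) → Fin N) s.castSucc)) *
              (if (Fin.snoc σ x : Fin (t+2) → Fin N) (Fin.last (t + 1)) = j then 1 else 0)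
            = (nuDist N t E α σ * Real.exp (-η * ∑ s : Fin t, ℓ s.val (σ s.castSucc)) *
                Real.exp (-η * ℓ t (σ (Fin.last t))) * Tr N E α t (σ (Fin.last t)) x) *
              (if x = j then 1 else 0) := by
          intro x
          rw [nuDist_snoc, loss_snoc, Fin.snoc_last]
          rw [mul_add, Real.exp_add]
          ring
        simp only [hx]
        simp only [mul_ite, mul_one, mul_zero, Finset.sum_ite_eq', Finset.mem_univ, if_true]
        simp only [ite_mul, one_mul, zero_mul, Finset.sum_ite_eq, Finset.mem_univ, if_true]
        ring
      simp only [step1]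
      rw [Finset.sum_comm]
      apply Finset.sum_congr rfl
      intro i _
      rw [← Finset.sum_mul, ← ih i, mul_comm (Real.exp (-η * ℓ t i)) (Tr N E α t i j),
        ← mul_assoc, mul_comm (w t i * Tr N E α t i j) (Real.exp (-η * ℓ t i))]
      ring
    rw [key, hupd]
    by_cases hj : j ∈ E (t + 1)
    · rw [if_pos hj]
      have hsplit : (∑ i : Fin N, w t i * Real.exp (-η * ℓ t i) * Tr N E α t i j)
          = ∑ i ∈ E t, w t i * Real.exp (-η * ℓ t i) * Tr N E α t i j := by
        rw [← Finset.sum_subset (Finset.subset_univ (E t))]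
        intro i _ hi
        rw [hwz t i hi]; ring
      rw [hsplit, ← Finset.sum_inter_add_sum_sdiff (E t) (E (t + 1))]
      have h1 : (∑ i ∈ E t \ E (t + 1), w t i * Real.exp (-η * ℓ t i) * Tr N E α t i j)
          = (1 / ((E (t + 1)).card : ℝ)) *
              ∑ i ∈ E t \ E (t + 1), w t i * Real.exp (-η * ℓ t i) := by
        rw [Finset.mul_sum]
        apply Finset.sum_congr rfl
        intro i hi
        have hi2 : i ∉ E (t + 1) := (Finset.mem_sdiff.mp hi).2
        rw [Tr, if_pos hj, if_neg hi2]; ring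
      have h2 : (∑ i ∈ E t ∩ E (t + 1), w t i * Real.exp (-η * ℓ t i) * Tr N E α t i j)
          = (α / ((E (t + 1)).card : ℝ)) *
              (∑ i ∈ E t ∩ E (t + 1), w t i * Real.exp (-η * ℓ t i))
            + (1 - α) * (if j ∈ E t ∩ E (t + 1) then w t j * Real.exp (-η * ℓ t j) else 0) := by
        have hterm : ∀ i ∈ E t ∩ E (t + 1),
            w t i * Real.exp (-η * ℓ t i) * Tr N E α t i j
            = (α / ((E (t + 1)).card : ℝ)) * (w t i * Real.exp (-η * ℓ t i))
              + (1 - α) * (if i = j then w t i * Real.exp (-η * ℓ t i) else 0) := by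
          intro i hi
          have hi2 : i ∈ E (t + 1) := (Finset.mem_inter.mp hi).2
          rw [Tr, if_pos hj, if_pos hi2]
          by_cases hij : i = j
          · rw [if_pos hij, if_pos hij]; ring
          · rw [if_neg hij, if_neg hij]; ring
        rw [Finset.sum_congr rfl hterm, Finset.sum_add_distrib, ← Finset.mul_sum,
          ← Finset.mul_sum,
          Finset.sum_ite_eq' (E t ∩ E (t + 1)) j (fun i => w t i * Real.exp (-η * ℓ t i))]
      rw [h1, h2]
      ring
    · rw [if_neg hj]
      symm
      apply Finset.sum_eq_zero
      intro i _
      rw [Tr, if_neg hj, mul_zero]
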